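/- For the states ρ_MVB (ρ₂₂=ρ₃₃=1/2, ρ₂₃=(√(β-1)/2)e^{iθ}, ρ₃₂ conjugate, other entries zero, β∈[1,2]), the fidelity attains the upper bound: F(ρ_MVB) = (1+C(ρ_MVB))/2 = (1+√(β-1))/2. -/

import Mathlib

open Matrix Kronecker Complex ComplexOrder

noncomputable section
open scoped Classical

/-- Pauli matrices. -/
def pauli : Fin 3 → Matrix (Fin 2) (Fin 2) ℂ
  | 0 => !![0, 1; 1, 0]
  | 1 => !![0, -Complex.I; Complex.I, 0]
  | 2 => !![1, 0; 0, -1]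

/-- Kronecker product of two one-qubit operators, reindexed to a 4×4 matrix. -/
def kron4 (A B : Matrix (Fin 2) (Fin 2) ℂ) : Matrix (Fin 4) (Fin 4) ℂ :=
  Matrix.reindex finProdFinEquiv finProdFinEquiv (A ⊗ₖ B)

/-- A density matrix: positive semidefinite with unit trace. -/
def IsDensity {n : ℕ} (ρ : Matrix (Fin n) (Fin n) ℂ) : Prop :=
  ρ.PosSemidef ∧ ρ.trace = 1

/-- The spin-flipped matrix ρ̃ = (σ₂⊗σ₂) ρ̄ (σ₂⊗σ₂). -/
def tildeMat (ρ : Matrix (Fin 4) (Fin 4) ℂ) : Matrix (Fin 4) (Fin 4) ℂ :=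
  kron4 (pauli 1) (pauli 1) * ρ.map (starRingEnd ℂ) * kron4 (pauli 1) (pauli 1)

/-- Positive square root of a positive semidefinite matrix (0 otherwise). -/
def msqrt {n : ℕ} (A : Matrix (Fin n) (Fin n) ℂ) : Matrix (Fin n) (Fin n) ℂ :=
  if h : A.PosSemidef then
    (h.1.eigenvectorUnitary : Matrix (Fin n) (Fin n) ℂ) *
      diagonal ((↑) ∘ Real.sqrt ∘ h.1.eigenvalues) *
      (star h.1.eigenvectorUnitary : Matrix (Fin n) (Fin n) ℂ) else 0

/-- ρ̂ = √(√ρ ρ̃ √ρ). -/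
def hatMat (ρ : Matrix (Fin 4) (Fin 4) ℂ) : Matrix (Fin 4) (Fin 4) ℂ :=
  msqrt (msqrt ρ * tildeMat ρ * msqrt ρ)

/-- Eigenvalues of a Hermitian matrix (0 otherwise). -/
def evalsC {n : ℕ} (A : Matrix (Fin n) (Fin n) ℂ) : Fin n → ℝ :=
  if h : A.IsHermitian then h.eigenvalues else 0

/-- The concurrence C(ρ) = max(0, 2 λ_max(ρ̂) − tr ρ̂). -/
def concurrence (ρ : Matrix (Fin 4) (Fin 4) ℂ) : ℝ :=
  max 0 (2 * (⨆ i, evalsC (hatMat ρ) i) - ∑ i, evalsC (hatMat ρ) i)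

/-- Correlation matrix T_ρ with entries tr(ρ σₙ⊗σₘ). -/
def Tmat (ρ : Matrix (Fin 4) (Fin 4) ℂ) : Matrix (Fin 3) (Fin 3) ℝ :=
  fun n m => ((ρ * kron4 (pauli n) (pauli m)).trace).re

/-- U_ρ = T_ρᵀ T_ρ. -/
def Umat (ρ : Matrix (Fin 4) (Fin 4) ℂ) : Matrix (Fin 3) (Fin 3) ℝ :=
  (Tmat ρ)ᵀ * Tmat ρ

/-- Eigenvalues of a real symmetric matrix (0 otherwise). -/
def evalsR {n : ℕ} (A : Matrix (Fin n) (Fin n) ℝ) : Fin n → ℝ :=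
  if h : A.IsHermitian then h.eigenvalues else 0

/-- The Horodecki quantity m(ρ) = max_{j<k} (u_j + u_k). -/
def mval (ρ : Matrix (Fin 4) (Fin 4) ℂ) : ℝ :=
  (Finset.univ.filter (fun p : Fin 3 × Fin 3 => p.1 < p.2)).sup'
    (by decide) (fun p => evalsR (Umat ρ) p.1 + evalsR (Umat ρ) p.2)

/-- Normalized linear entropy S_L(ρ) = (4/3)(1 − tr ρ²). -/
def linEntropy (ρ : Matrix (Fin 4) (Fin 4) ℂ) : ℝ :=
  (4/3) * (1 - ((ρ * ρ).trace).re)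

/-- The class E₀ state with parameters a, b, c, θ. -/
def rhoE0 (a b c θ : ℝ) : Matrix (Fin 4) (Fin 4) ℂ :=
  !![0, 0, 0, 0;
     0, (a : ℂ), (c/2 : ℂ) * Complex.exp (θ * Complex.I), 0;
     0, (c/2 : ℂ) * Complex.exp (-θ * Complex.I), (b : ℂ), 0;
     0, 0, 0, ((1 - a - b : ℝ) : ℂ)]

/-- The maximal-CHSH-violation states ρ_MVB. -/
def rhoMVB (β θ : ℝ) : Matrix (Fin 4) (Fin 4) ℂ :=
  rhoE0 (1/2) (1/2) (Real.sqrt (β - 1)) θ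

/-- Partial trace over the second qubit. -/
def ptrB (M : Matrix (Fin 4) (Fin 4) ℂ) : Matrix (Fin 2) (Fin 2) ℂ :=
  fun i j => ∑ k : Fin 2, M (finProdFinEquiv (i, k)) (finProdFinEquiv (j, k))

/-- Partial trace over the first qubit. -/
def ptrA (M : Matrix (Fin 4) (Fin 4) ℂ) : Matrix (Fin 2) (Fin 2) ℂ :=
  fun i j => ∑ k : Fin 2, M (finProdFinEquiv (k, i)) (finProdFinEquiv (k, j))

/-- A maximally entangled pure two-qubit state: a unit vector whose reduced
density matrices are I₂/2. -/
def IsMaxEntangled (ψ : Fin 4 → ℂ) : Prop :=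
  (∑ i, ‖ψ i‖ ^ 2 = 1) ∧
  ptrA (Matrix.vecMulVec ψ (fun i => starRingEnd ℂ (ψ i))) = (1/2 : ℂ) • 1 ∧
  ptrB (Matrix.vecMulVec ψ (fun i => starRingEnd ℂ (ψ i))) = (1/2 : ℂ) • 1

/-- Fidelity F(ρ) = max over maximally entangled ψ of ⟨ψ|ρ|ψ⟩. -/
def fidelity (ρ : Matrix (Fin 4) (Fin 4) ℂ) : ℝ :=
  sSup {x : ℝ | ∃ ψ : Fin 4 → ℂ, IsMaxEntangled ψ ∧
    x = ((ρ * Matrix.vecMulVec ψ (fun i => starRingEnd ℂ (ψ i))).trace).re}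

/-! ### Auxiliary lemmas -/

section Aux

variable {n : ℕ}

lemma sum_eigs_eq_trace_re {A : Matrix (Fin n) (Fin n) ℂ} (hH : A.IsHermitian) :
    ∑ i, hH.eigenvalues i = A.trace.re := by
  have h : A.trace = ∑ i, (hH.eigenvalues i : ℂ) := by
    conv_lhs => rw [hH.spectral_theorem]
    rw [Unitary.conjStarAlgAut_apply, Matrix.trace_mul_cycle, Matrix.UnitaryGroup.star_mul_self, Matrix.one_mul,
      Matrix.trace_diagonal]
    simp
  rw [h]
  simp

lemma star_dot_self_eigenvectorBasis {A : Matrix (Fin n) (Fin n) ℂ} (hH : A.IsHermitian)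
    (i : Fin n) :
    dotProduct (star ⇑(hH.eigenvectorBasis i)) ⇑(hH.eigenvectorBasis i) = 1 := by
  rw [dotProduct_comm, ← EuclideanSpace.inner_eq_star_dotProduct]
  rw [inner_self_eq_norm_sq_to_K, hH.eigenvectorBasis.orthonormal.1 i]
  norm_num

lemma eigenvalue_le {A : Matrix (Fin n) (Fin n) ℂ} (hH : A.IsHermitian) (μ : ℝ)
    (h : ∀ x : Fin n → ℂ,
      (dotProduct (star x) (A *ᵥ x)).re ≤ μ * (dotProduct (star x) x).re)
    (i : Fin n) : hH.eigenvalues i ≤ μ := by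
  have h1 := hH.eigenvalues_eq i
  have h2 := h (⇑(hH.eigenvectorBasis i))
  rw [star_dot_self_eigenvectorBasis hH i] at h2
  simpa [h1] using h2

lemma quadform_le_sup [NeZero n] {A : Matrix (Fin n) (Fin n) ℂ} (hH : A.IsHermitian)
    (x : Fin n → ℂ) :
    (dotProduct (star x) (A *ᵥ x)).re ≤
      (⨆ i, hH.eigenvalues i) * (dotProduct (star x) x).re := by
  set U : Matrix (Fin n) (Fin n) ℂ := (hH.eigenvectorUnitary : Matrix (Fin n) (Fin n) ℂ) with hUdef
  set y : Fin n → ℂ := (star U) *ᵥ x with hy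
  have hsy : star y = star x ᵥ* U := by
    rw [hy, Matrix.star_mulVec, Matrix.star_eq_conjTranspose, Matrix.conjTranspose_conjTranspose]
  have hUU : U * star U = 1 := hH.eigenvectorUnitary.2.2
  have h1 : dotProduct (star x) (A *ᵥ x)
      = ∑ i, (hH.eigenvalues i : ℂ) * (starRingEnd ℂ (y i) * y i) := by
    conv_lhs => rw [hH.spectral_theorem]
    rw [Unitary.conjStarAlgAut_apply, ← Matrix.mulVec_mulVec, ← Matrix.mulVec_mulVec, dotProduct_mulVec, ← hsy]
    simp only [dotProduct, Matrix.mulVec_diagonal, Pi.star_apply, Function.comp_apply]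
    refine Finset.sum_congr rfl fun i _ => ?_
    simp [RingHom.id_apply]; ring
  have h2 : dotProduct (star x) x = ∑ i, (starRingEnd ℂ (y i) * y i) := by
    have h3 : dotProduct (star y) y = dotProduct (star x) x := by
      rw [hsy, hy, ← dotProduct_mulVec, Matrix.mulVec_mulVec, hUU, Matrix.one_mulVec]
    rw [← h3]
    simp [dotProduct]
  have hnorm : ∀ z : ℂ, (starRingEnd ℂ z * z) = (Complex.normSq z : ℂ) := by
    intro z; rw [mul_comm, Complex.mul_conj]
  have hre1 : (dotProduct (star x) (A *ᵥ x)).re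
      = ∑ i, hH.eigenvalues i * Complex.normSq (y i) := by
    rw [h1, Complex.re_sum]
    refine Finset.sum_congr rfl fun i _ => ?_
    rw [hnorm]
    simp [Complex.mul_re]
  have hre2 : (dotProduct (star x) x).re = ∑ i, Complex.normSq (y i) := by
    rw [h2, Complex.re_sum]
    refine Finset.sum_congr rfl fun i _ => ?_
    rw [hnorm]; simp
  rw [hre1, hre2, Finset.mul_sum]
  refine Finset.sum_le_sum fun i _ => ?_
  have hle : hH.eigenvalues i ≤ ⨆ j, hH.eigenvalues j :=
    le_ciSup (Set.Finite.bddAbove (Set.finite_range _)) i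
  exact mul_le_mul_of_nonneg_right hle (Complex.normSq_nonneg _)

lemma trace_mul_vecMulVec (A : Matrix (Fin n) (Fin n) ℂ) (v : Fin n → ℂ) :
    (A * Matrix.vecMulVec v (fun i => starRingEnd ℂ (v i))).trace
      = dotProduct (star v) (A *ᵥ v) := by
  simp only [Matrix.trace, Matrix.diag, Matrix.mul_apply, Matrix.vecMulVec_apply,
    dotProduct, Matrix.mulVec, Pi.star_apply, Finset.mul_sum]
  exact Finset.sum_congr rfl fun i _ => Finset.sum_congr rfl fun j _ => by rw [Complex.star_def]; ring

end Aux

/-! ### Concrete computations for ρ_MVB -/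

section Concrete

variable (β θ : ℝ)

lemma exp_neg_conj : Complex.exp (-θ * Complex.I) = starRingEnd ℂ (Complex.exp (θ * Complex.I)) := by
  rw [← Complex.exp_conj]
  congr 1
  simp [Complex.conj_I]

lemma quad_eq (x : Fin 4 → ℂ) :
    dotProduct (star x) ((rhoMVB β θ) *ᵥ x) =
      (1/2 : ℂ) * (starRingEnd ℂ (x 1) * x 1 + starRingEnd ℂ (x 2) * x 2)
      + ((Real.sqrt (β-1) : ℂ)/2) * Complex.exp (θ * Complex.I) * (starRingEnd ℂ (x 1) * x 2)
      + ((Real.sqrt (β-1) : ℂ)/2) * Complex.exp (-θ * Complex.I) * (starRingEnd ℂ (x 2) * x 1) := by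
  simp [rhoMVB, rhoE0, dotProduct, Matrix.mulVec, Fin.sum_univ_four]
  ring

lemma quad_real (x : Fin 4 → ℂ) :
    dotProduct (star x) ((rhoMVB β θ) *ᵥ x) =
      (((Complex.normSq (x 1) + Complex.normSq (x 2))/2
        + Real.sqrt (β-1) * (Complex.exp (θ * Complex.I) * (starRingEnd ℂ (x 1) * x 2)).re : ℝ) : ℂ) := by
  rw [quad_eq]
  rw [exp_neg_conj]
  have h1 : starRingEnd ℂ (x 1) * x 1 = (Complex.normSq (x 1) : ℂ) := by
    rw [mul_comm, Complex.mul_conj]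
  have h2 : starRingEnd ℂ (x 2) * x 2 = (Complex.normSq (x 2) : ℂ) := by
    rw [mul_comm, Complex.mul_conj]
  have h3 : ((Real.sqrt (β-1) : ℂ)/2) * (starRingEnd ℂ (Complex.exp (θ * Complex.I)))
        * (starRingEnd ℂ (x 2) * x 1)
      = ((Real.sqrt (β-1) : ℂ)/2) * starRingEnd ℂ (Complex.exp (θ * Complex.I) * (starRingEnd ℂ (x 1) * x 2)) := by
    simp only [_root_.map_mul, RingHomCompTriple.comp_apply, RingHom.id_apply, Complex.conj_conj]
    ring
  rw [h1, h2, h3]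
  set z := Complex.exp (θ * Complex.I) * (starRingEnd ℂ (x 1) * x 2) with hz
  have h4 : ((Real.sqrt (β-1) : ℂ)/2) * z + ((Real.sqrt (β-1) : ℂ)/2) * starRingEnd ℂ z
      = ((Real.sqrt (β-1) * z.re : ℝ) : ℂ) := by
    rw [mul_comm ((Real.sqrt (β-1) : ℂ)/2) z, mul_comm ((Real.sqrt (β-1) : ℂ)/2) (starRingEnd ℂ z),
      ← add_mul, Complex.add_conj]
    push_cast
    ring
  rw [Complex.ofReal_add, ← h4]
  push_cast
  ring

lemma normSq_exp_theta : Complex.normSq (Complex.exp (θ * Complex.I)) = 1 := by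
  have := Complex.norm_exp_ofReal_mul_I θ
  rw [← Complex.sq_norm, this]
  norm_num

lemma norm_dot (x : Fin 4 → ℂ) :
    dotProduct (star x) x
      = ((Complex.normSq (x 0) + Complex.normSq (x 1) + Complex.normSq (x 2)
          + Complex.normSq (x 3) : ℝ) : ℂ) := by
  simp only [dotProduct, Fin.sum_univ_four, Pi.star_apply, Complex.star_def]
  push_cast
  rw [mul_comm ((starRingEnd ℂ) (x 0)), mul_comm ((starRingEnd ℂ) (x 1)),
    mul_comm ((starRingEnd ℂ) (x 2)), mul_comm ((starRingEnd ℂ) (x 3))]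
  simp [Complex.mul_conj]

lemma quad_re_le (hβ1 : 1 ≤ β) (x : Fin 4 → ℂ) :
    (dotProduct (star x) ((rhoMVB β θ) *ᵥ x)).re ≤
      ((1 + Real.sqrt (β-1))/2) * (dotProduct (star x) x).re := by
  rw [quad_real, norm_dot, Complex.ofReal_re, Complex.ofReal_re]
  set c := Real.sqrt (β-1) with hc
  have hc0 : 0 ≤ c := Real.sqrt_nonneg _
  set z := Complex.exp (θ * Complex.I) * (starRingEnd ℂ (x 1) * x 2) with hz
  set n0 := Complex.normSq (x 0); set n1 := Complex.normSq (x 1)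
  set n2 := Complex.normSq (x 2); set n3 := Complex.normSq (x 3)
  have hn0 : 0 ≤ n0 := Complex.normSq_nonneg _
  have hn1 : 0 ≤ n1 := Complex.normSq_nonneg _
  have hn2 : 0 ≤ n2 := Complex.normSq_nonneg _
  have hn3 : 0 ≤ n3 := Complex.normSq_nonneg _
  have hzsq : z.re ^ 2 ≤ n1 * n2 := by
    have h1 : z.re ^ 2 ≤ Complex.normSq z := by
      rw [Complex.normSq_apply]; nlinarith [sq_nonneg z.im]
    have h2 : Complex.normSq z = n1 * n2 := by
      rw [hz, _root_.map_mul, _root_.map_mul, normSq_exp_theta, Complex.normSq_conj]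
      ring
    linarith
  have hzle : z.re ≤ (n1 + n2)/2 := by nlinarith [sq_nonneg (n1 - n2), sq_nonneg (n1 + n2 - 2*z.re)]
  nlinarith [mul_le_mul_of_nonneg_left hzle hc0]

lemma rho_herm : (rhoMVB β θ).IsHermitian := by
  have he := exp_neg_conj θ
  have he2 : starRingEnd ℂ (Complex.exp (-((θ:ℂ) * Complex.I))) = Complex.exp ((θ:ℂ) * Complex.I) := by
    rw [← Complex.exp_conj]; simp [Complex.conj_I]
  ext i j
  rw [Matrix.conjTranspose_apply]
  fin_cases i <;> fin_cases j <;>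
    simp [rhoMVB, rhoE0, Complex.star_def, ← he, _root_.map_mul, map_div₀,
      Complex.conj_ofReal, Matrix.vecHead, Matrix.vecTail, he2]

lemma rho_psd (hβ1 : 1 ≤ β) (hβ2 : β ≤ 2) : (rhoMVB β θ).PosSemidef := by
  refine Matrix.PosSemidef.of_dotProduct_mulVec_nonneg (rho_herm β θ) fun x => ?_
  rw [quad_real]
  rw [Complex.zero_le_real]
  set c := Real.sqrt (β-1) with hc
  have hc0 : 0 ≤ c := Real.sqrt_nonneg _
  have hc1 : c ≤ 1 := by
    rw [hc]
    have h := Real.sqrt_le_sqrt (show β - 1 ≤ 1 by linarith)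
    simpa using h
  set z := Complex.exp (θ * Complex.I) * (starRingEnd ℂ (x 1) * x 2) with hz
  set n1 := Complex.normSq (x 1); set n2 := Complex.normSq (x 2)
  have hn1 : 0 ≤ n1 := Complex.normSq_nonneg _
  have hn2 : 0 ≤ n2 := Complex.normSq_nonneg _
  have hzsq : z.re ^ 2 ≤ n1 * n2 := by
    have h1 : z.re ^ 2 ≤ Complex.normSq z := by
      rw [Complex.normSq_apply]; nlinarith [sq_nonneg z.im]
    have h2 : Complex.normSq z = n1 * n2 := by
      rw [hz, _root_.map_mul, _root_.map_mul, normSq_exp_theta, Complex.normSq_conj]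
      ring
    linarith
  have hzle : -z.re ≤ (n1 + n2)/2 := by
    nlinarith [sq_nonneg (n1 - n2), sq_nonneg (n1 + n2 + 2*z.re)]
  nlinarith [mul_le_mul_of_nonneg_left hzle hc0, mul_le_mul_of_nonneg_right hc1 (by linarith : (0:ℝ) ≤ (n1+n2)/2)]

end Concrete

/-! ### The spin flip and the hat matrix -/

section Flip

open scoped MatrixOrder in
lemma msqrt_eq_sqrt {n : ℕ} {A : Matrix (Fin n) (Fin n) ℂ} (h : A.PosSemidef) :
    msqrt A = CFC.sqrt A := by
  rw [msqrt, dif_pos h, CFC.sqrt_eq_real_sqrt A h.nonneg, cfcₙ_eq_cfc, Matrix.IsHermitian.cfc_eq h.1]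
  rfl

open scoped MatrixOrder in
lemma msqrt_mul_self' {n : ℕ} {A : Matrix (Fin n) (Fin n) ℂ} (h : A.PosSemidef) :
    msqrt A * msqrt A = A := by
  rw [msqrt_eq_sqrt h]
  exact CFC.sqrt_mul_sqrt_self A h.nonneg

open scoped MatrixOrder in
lemma msqrt_sq {n : ℕ} {A : Matrix (Fin n) (Fin n) ℂ} (h : A.PosSemidef)
    (h2 : (A * A).PosSemidef) : msqrt (A * A) = A := by
  rw [msqrt_eq_sqrt h2]
  exact CFC.sqrt_mul_self A h.nonneg

lemma kron4_pauli1 : kron4 (pauli 1) (pauli 1) =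
    !![0,0,0,-1; 0,0,1,0; 0,1,0,0; -1,0,0,0] := by
  have h0 : finProdFinEquiv.symm (0 : Fin 4) = ((0 : Fin 2), (0 : Fin 2)) := rfl
  have h1 : finProdFinEquiv.symm (1 : Fin 4) = ((0 : Fin 2), (1 : Fin 2)) := rfl
  have h2 : finProdFinEquiv.symm (2 : Fin 4) = ((1 : Fin 2), (0 : Fin 2)) := rfl
  have h3 : finProdFinEquiv.symm (3 : Fin 4) = ((1 : Fin 2), (1 : Fin 2)) := rfl
  ext i j
  fin_cases i <;> fin_cases j <;>
    simp [kron4, pauli, h0, h1, h2, h3, Complex.I_mul_I, Matrix.vecHead, Matrix.vecTail]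

lemma tilde_rho (β θ : ℝ) : tildeMat (rhoMVB β θ) = rhoMVB β θ := by
  have he := exp_neg_conj θ
  have he2 : starRingEnd ℂ (Complex.exp (-((θ:ℂ) * Complex.I))) = Complex.exp ((θ:ℂ) * Complex.I) := by
    rw [← Complex.exp_conj]; simp [Complex.conj_I]
  ext i j
  fin_cases i <;> fin_cases j <;>
    simp [tildeMat, kron4_pauli1, rhoMVB, rhoE0, Matrix.mul_apply, Fin.sum_univ_four,
      Matrix.map_apply, Complex.conj_ofReal, map_div₀, _root_.map_mul, ← he, he2,
      Matrix.vecHead, Matrix.vecTail, Matrix.vecMul, dotProduct, Complex.conj_ofNat] <;>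
    norm_num

lemma hat_rho (β θ : ℝ) (hβ1 : 1 ≤ β) (hβ2 : β ≤ 2) :
    hatMat (rhoMVB β θ) = rhoMVB β θ := by
  have hpsd := rho_psd β θ hβ1 hβ2
  have hpsd2 : (rhoMVB β θ * rhoMVB β θ).PosSemidef := by
    simpa [pow_two] using hpsd.pow 2
  have hmid : msqrt (rhoMVB β θ) * rhoMVB β θ * msqrt (rhoMVB β θ)
      = rhoMVB β θ * rhoMVB β θ := by
    have hs := msqrt_mul_self' hpsd
    generalize msqrt (rhoMVB β θ) = s at hs ⊢
    rw [← hs]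
    simp only [Matrix.mul_assoc]
  rw [hatMat, tilde_rho, hmid]
  exact msqrt_sq hpsd hpsd2

end Flip

/-! ### The optimal maximally entangled state -/

section Achiever

/-- The optimal maximally entangled state for ρ_MVB. -/
def psiOpt (θ : ℝ) : Fin 4 → ℂ :=
  ![0, Complex.exp (θ * Complex.I) * (((Real.sqrt 2)⁻¹ : ℝ) : ℂ), (((Real.sqrt 2)⁻¹ : ℝ) : ℂ), 0]

lemma s_mul_s : ((((Real.sqrt 2)⁻¹ : ℝ) : ℂ)) * ((((Real.sqrt 2)⁻¹ : ℝ) : ℂ)) = 1/2 := by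
  have h2 : Real.sqrt 2 * Real.sqrt 2 = 2 := Real.mul_self_sqrt (by norm_num)
  norm_cast
  rw [← mul_inv, h2]
  norm_num

lemma exp_mul_conj (θ : ℝ) :
    Complex.exp (θ * Complex.I) * starRingEnd ℂ (Complex.exp (θ * Complex.I)) = 1 := by
  rw [Complex.mul_conj, normSq_exp_theta]
  norm_num

lemma psiOpt_norm (θ : ℝ) : ∑ i, ‖psiOpt θ i‖ ^ 2 = 1 := by
  have h : ‖Complex.exp (θ * Complex.I)‖ = 1 := Complex.norm_exp_ofReal_mul_I θ
  simp [psiOpt, Fin.sum_univ_four, norm_mul, h, Complex.norm_real,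
    _root_.abs_of_nonneg (inv_nonneg.mpr (Real.sqrt_nonneg 2))]
  norm_num [inv_pow, Real.sq_sqrt]

lemma ptrA_eq (M : Matrix (Fin 4) (Fin 4) ℂ) :
    ptrA M = !![M 0 0 + M 2 2, M 0 1 + M 2 3; M 1 0 + M 3 2, M 1 1 + M 3 3] := by
  ext i j
  fin_cases i <;> fin_cases j <;>
    simp [ptrA, Fin.sum_univ_two] <;> rfl

lemma ptrB_eq (M : Matrix (Fin 4) (Fin 4) ℂ) :
    ptrB M = !![M 0 0 + M 1 1, M 0 2 + M 1 3; M 2 0 + M 3 1, M 2 2 + M 3 3] := by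
  ext i j
  fin_cases i <;> fin_cases j <;>
    simp [ptrB, Fin.sum_univ_two] <;> rfl

lemma psiOpt_one_sq (θ : ℝ) : psiOpt θ 1 * starRingEnd ℂ (psiOpt θ 1) = 1/2 := by
  have he := exp_mul_conj θ
  have hs := s_mul_s
  simp only [psiOpt, Matrix.cons_val_one, Matrix.head_cons, Matrix.cons_val_zero, _root_.map_mul, Complex.conj_ofReal]
  rw [mul_mul_mul_comm, he, one_mul, hs]

lemma psiOpt_two_sq (θ : ℝ) : psiOpt θ 2 * starRingEnd ℂ (psiOpt θ 2) = 1/2 := by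
  have hs := s_mul_s
  simp only [psiOpt, Matrix.cons_val_two, Matrix.tail_cons, Matrix.head_cons, Complex.conj_ofReal]
  rw [hs]

lemma psiOpt_maxEnt (θ : ℝ) : IsMaxEntangled (psiOpt θ) := by
  have h11 := psiOpt_one_sq θ
  have h22 := psiOpt_two_sq θ
  have hz0 : psiOpt θ 0 = 0 := rfl
  have hz3 : psiOpt θ 3 = 0 := rfl
  refine ⟨psiOpt_norm θ, ?_, ?_⟩
  · rw [ptrA_eq]
    ext i j
    fin_cases i <;> fin_cases j <;>
      simp [Matrix.vecMulVec_apply, Matrix.one_apply, hz0, hz3, h11, h22] <;> norm_num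
  · rw [ptrB_eq]
    ext i j
    fin_cases i <;> fin_cases j <;>
      simp [Matrix.vecMulVec_apply, Matrix.one_apply, hz0, hz3, h11, h22] <;> norm_num

end Achiever

section Values

lemma psiOpt_normSq_one (θ : ℝ) : Complex.normSq (psiOpt θ 1) = 1/2 := by
  have h := psiOpt_one_sq θ
  rw [Complex.mul_conj] at h
  have h2 : ((Complex.normSq (psiOpt θ 1) : ℝ) : ℂ) = (((1:ℝ)/2 : ℝ) : ℂ) := by
    rw [h]; push_cast; ring
  exact_mod_cast h2

lemma psiOpt_normSq_two (θ : ℝ) : Complex.normSq (psiOpt θ 2) = 1/2 := by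
  have h := psiOpt_two_sq θ
  rw [Complex.mul_conj] at h
  have h2 : ((Complex.normSq (psiOpt θ 2) : ℝ) : ℂ) = (((1:ℝ)/2 : ℝ) : ℂ) := by
    rw [h]; push_cast; ring
  exact_mod_cast h2

lemma psiOpt_quad (β θ : ℝ) :
    dotProduct (star (psiOpt θ)) ((rhoMVB β θ) *ᵥ psiOpt θ)
      = (((1 + Real.sqrt (β-1))/2 : ℝ) : ℂ) := by
  rw [quad_real]
  have hcross : Complex.exp (θ * Complex.I) * (starRingEnd ℂ (psiOpt θ 1) * psiOpt θ 2)
      = 1/2 := by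
    have he := exp_mul_conj θ
    have hs := s_mul_s
    simp only [psiOpt, Matrix.cons_val_one, Matrix.head_cons, Matrix.cons_val_zero, Matrix.cons_val_two,
      Matrix.tail_cons, _root_.map_mul, Complex.conj_ofReal]
    calc Complex.exp (θ * Complex.I) *
        (starRingEnd ℂ (Complex.exp (θ * Complex.I)) * ((((Real.sqrt 2)⁻¹ : ℝ) : ℂ))
          * ((((Real.sqrt 2)⁻¹ : ℝ) : ℂ)))
        = (Complex.exp (θ * Complex.I) * starRingEnd ℂ (Complex.exp (θ * Complex.I)))
          * (((((Real.sqrt 2)⁻¹ : ℝ) : ℂ)) * ((((Real.sqrt 2)⁻¹ : ℝ) : ℂ))) := by ring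
      _ = 1/2 := by rw [he, hs, one_mul]
  rw [hcross, psiOpt_normSq_one, psiOpt_normSq_two]
  push_cast
  norm_num
  ring

lemma psiOpt_dot (θ : ℝ) : dotProduct (star (psiOpt θ)) (psiOpt θ) = 1 := by
  rw [norm_dot, psiOpt_normSq_one, psiOpt_normSq_two]
  have hz0 : psiOpt θ 0 = 0 := rfl
  have hz3 : psiOpt θ 3 = 0 := rfl
  rw [hz0, hz3]
  norm_num

lemma trace_rho (β θ : ℝ) : (rhoMVB β θ).trace = 1 := by
  simp [rhoMVB, rhoE0, Matrix.trace, Matrix.diag, Fin.sum_univ_four]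
  try norm_num

end Values

theorem fidelity_rhoMVB' (β θ : ℝ) (hβ1 : 1 ≤ β) (hβ2 : β ≤ 2) :
    fidelity (rhoMVB β θ) = (1 + concurrence (rhoMVB β θ)) / 2 ∧
    fidelity (rhoMVB β θ) = (1 + Real.sqrt (β - 1)) / 2 := by
  set c := Real.sqrt (β - 1) with hcdef
  have hc0 : 0 ≤ c := Real.sqrt_nonneg _
  have hH := rho_herm β θ
  have hquad := quad_re_le β θ hβ1
  have hub : ∀ i, hH.eigenvalues i ≤ (1 + c)/2 := fun i => eigenvalue_le hH _ hquad i
  have hlb : (1 + c)/2 ≤ ⨆ i, hH.eigenvalues i := by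
    have h := quadform_le_sup hH (psiOpt θ)
    rw [psiOpt_quad, psiOpt_dot] at h
    simpa using h
  have hsup : (⨆ i, hH.eigenvalues i) = (1 + c)/2 := le_antisymm (ciSup_le hub) hlb
  have hsum : ∑ i, hH.eigenvalues i = 1 := by
    rw [sum_eigs_eq_trace_re, trace_rho]
    simp
  have hcon : concurrence (rhoMVB β θ) = c := by
    unfold concurrence
    rw [hat_rho β θ hβ1 hβ2,
      show evalsC (rhoMVB β θ) = hH.eigenvalues from dif_pos hH, hsup, hsum]
    rw [show 2 * ((1 + c)/2) - 1 = c by ring]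
    exact max_eq_right hc0
  have hfid : fidelity (rhoMVB β θ) = (1 + c)/2 := by
    unfold fidelity
    apply IsGreatest.csSup_eq
    constructor
    · exact ⟨psiOpt θ, psiOpt_maxEnt θ, by rw [trace_mul_vecMulVec, psiOpt_quad]; simp [hcdef]⟩
    · rintro x ⟨ψ, hME, rfl⟩
      rw [trace_mul_vecMulVec]
      have h := quad_re_le β θ hβ1 ψ
      have hn : (dotProduct (star ψ) ψ).re = 1 := by
        rw [norm_dot, Complex.ofReal_re]
        have h1 := hME.1
        rw [Fin.sum_univ_four] at h1
        simp only [Complex.sq_norm] at h1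
        exact h1
      rw [hn, mul_one] at h
      exact h
  exact ⟨by rw [hfid, hcon], hfid⟩

/-- ρ_MVB attains the fidelity bound. -/
theorem fidelity_rhoMVB (β θ : ℝ) (hβ1 : 1 ≤ β) (hβ2 : β ≤ 2) :
    fidelity (rhoMVB β θ) = (1 + concurrence (rhoMVB β θ)) / 2 ∧
    fidelity (rhoMVB β θ) = (1 + Real.sqrt (β - 1)) / 2 := fidelity_rhoMVB' β θ hβ1 hβ2

end
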